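/- Fix α, β, γ, δ ∈ ℝ and i ∈ ℕ, and for y ∈ ℝ[[X]] write E_sh(y) := E(X − 1, y, Dy, D(Dy)) ∈ ℝ[[X]]. Then: (i) if y, ỹ ∈ ℝ[[X]] satisfy coeff_m(y) = coeff_m(ỹ) for all m ≤ i + 2, then coeff_i(E_sh(y)) = coeff_i(E_sh(ỹ)); and (ii) if y, ỹ ∈ ℝ[[X]] satisfy coeff_m(y) = coeff_m(ỹ) for all m ≠ i + 2, then coeff_i(E_sh(y)) − coeff_i(E_sh(ỹ)) = 8·a₀·(i+2)·(i+1)·(a₀² − 1)·(coeff_{i+2}(y) − coeff_{i+2}(ỹ)), where a₀ = coeff₀(y). In particular, when a₀ ≠ 0 and a₀² ≠ 1, the coefficient equation of order i determines coeff_{i+2}(y) uniquely from coeff₀(y), …, coeff_{i+1}(y). -/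

import Mathlib

/-- Formal derivative of a power series, defined coefficientwise:
the coefficient of `X^n` in `D f` is `(n+1) * coeff (n+1) f`. -/
noncomputable def D (f : PowerSeries ℝ) : PowerSeries ℝ :=
  PowerSeries.mk fun n => ((n : ℝ) + 1) * PowerSeries.coeff (n + 1) f

/-- The Painlevé VI expression `E(X - 1, y, Dy, D(Dy))`, i.e. PVI shifted to be
centered at `x = -1`, as a formal power series. -/
noncomputable def Esh (α β γ δ : ℝ) (y : PowerSeries ℝ) : PowerSeries ℝ :=
  let x : PowerSeries ℝ := PowerSeries.X - 1
  let p : PowerSeries ℝ := D y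
  let q : PowerSeries ℝ := D (D y)
  2*x^2*y*(x-1)^2*(y-1)*(y-x)*q
    - x^2*(x-1)^2*(3*y^2 - 2*(1+x)*y + x)*p^2
    + 2*x*y*(x-1)*(y-1)*((2*x-1)*y + x^2)*p
    - 2*(PowerSeries.C α * y^2*(y-1)^2*(y-x)^2
        + PowerSeries.C β * x*(y-1)^2*(y-x)^2
        + PowerSeries.C γ * y^2*(x-1)*(y-x)^2
        + PowerSeries.C δ * x*y^2*(x-1)*(y-1)^2)

/-!
Reduce modulo `X ^ (i + 1)`, through which `coeff i` factors. There `Esh y` is a polynomial in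
`y`, `D y`, `D (D y)` that is affine in `D (D y)`, with slope `2 x² (x - 1)² y (y - 1) (y - x)` at
`x = X - 1`, whose constant term is `8 a₀ (a₀² - 1)`. Adding `c X^(i+2)` to `y` leaves `y` and `D y`
unchanged modulo `X ^ (i + 1)` and adds `(i + 1) (i + 2) c X^i` to `D (D y)`, which shifts
`coeff i (Esh y)` by `8 a₀ (a₀² - 1) (i + 1) (i + 2) c`; coefficients beyond `i + 2` do not matter.
-/

open PowerSeries

lemma D_add (f g : ℝ⟦X⟧) : D (f + g) = D f + D g := by
  ext n; simp [D, mul_add]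

lemma D_sub (f g : ℝ⟦X⟧) : D (f - g) = D f - D g := by
  ext n; simp [D, mul_sub]

lemma D_C_mul_X_pow_succ (c : ℝ) (n : ℕ) :
    D (C c * X ^ (n + 1)) = C ((n + 1) * c) * X ^ n := by
  ext m
  simp only [D, coeff_mk, coeff_C_mul, coeff_X_pow, add_left_inj]
  split_ifs with hm
  · rw [hm]; ring
  · ring

lemma X_pow_dvd_D {n : ℕ} {f : ℝ⟦X⟧} (h : X ^ (n + 1) ∣ f) : X ^ n ∣ D f := by
  rw [X_pow_dvd_iff] at h ⊢
  intro m hm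
  simp [D, h (m + 1) (by omega)]

lemma mk_span_X_pow_eq_iff {n : ℕ} {f g : ℝ⟦X⟧} :
    Ideal.Quotient.mk (Ideal.span {X ^ n}) f = Ideal.Quotient.mk (Ideal.span {X ^ n}) g ↔
      X ^ n ∣ f - g := by
  rw [Ideal.Quotient.mk_eq_mk_iff_sub_mem, Ideal.mem_span_singleton]

lemma coeff_eq_of_X_pow_dvd_sub {n : ℕ} {f g : ℝ⟦X⟧} (h : X ^ (n + 1) ∣ f - g) :
    coeff n f = coeff n g := by
  have := X_pow_dvd_iff.mp h n n.lt_succ_self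
  rwa [map_sub, sub_eq_zero] at this

lemma coeff_mul_C_mul_X_pow (f : ℝ⟦X⟧) (k : ℝ) (n : ℕ) :
    coeff n (f * (C k * X ^ n)) = k * coeff 0 f := by
  rw [mul_left_comm, coeff_C_mul, ← coeff_mul_X_pow f n 0, zero_add]

lemma map_Esh_eq_add (α β γ δ : ℝ) {S : Type*} [CommRing S] (φ : ℝ⟦X⟧ →+* S) {y z s : ℝ⟦X⟧}
    (hy : φ y = φ z) (hp : φ (D y) = φ (D z)) (hq : φ (D (D y)) = φ (D (D z) + s)) :
    φ (Esh α β γ δ y) =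
      φ (Esh α β γ δ z + 2 * (X - 1) ^ 2 * z * (X - 2) ^ 2 * (z - 1) * (z - X + 1) * s) := by
  simp only [Esh, map_mul, map_sub, map_add, map_pow, map_one, map_ofNat] at hq ⊢
  rw [hy, hp, hq]
  ring

lemma X_pow_dvd_Esh_sub (α β γ δ : ℝ) {n : ℕ} {y z : ℝ⟦X⟧} (h : X ^ (n + 2) ∣ y - z) :
    X ^ n ∣ Esh α β γ δ y - Esh α β γ δ z := by
  have hD : X ^ (n + 1) ∣ D y - D z := D_sub y z ▸ X_pow_dvd_D h
  have hDD : X ^ n ∣ D (D y) - D (D z) := D_sub (D y) (D z) ▸ X_pow_dvd_D hD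
  rw [← mk_span_X_pow_eq_iff] at hDD ⊢
  have hy := mk_span_X_pow_eq_iff.mpr ((pow_dvd_pow X (n.le_add_right 2)).trans h)
  have hp := mk_span_X_pow_eq_iff.mpr ((pow_dvd_pow X (n.le_add_right 1)).trans hD)
  have := map_Esh_eq_add α β γ δ _ hy hp (s := 0) (by rwa [add_zero])
  rwa [mul_zero, add_zero] at this

lemma coeff_Esh_add_C_mul_X_pow (α β γ δ : ℝ) (y : ℝ⟦X⟧) (c : ℝ) (n : ℕ) :
    coeff n (Esh α β γ δ (y + C c * X ^ (n + 2))) = coeff n (Esh α β γ δ y)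
      + 8 * coeff 0 y * (n + 2) * (n + 1) * (coeff 0 y ^ 2 - 1) * c := by
  set k : ℝ := (n + 1) * ((↑(n + 1) + 1) * c)
  have hD : D (y + C c * X ^ (n + 2)) = D y + C ((↑(n + 1) + 1) * c) * X ^ (n + 1) := by
    rw [D_add, D_C_mul_X_pow_succ]
  have hDD : D (D (y + C c * X ^ (n + 2))) = D (D y) + C k * X ^ n := by
    rw [hD, D_add, D_C_mul_X_pow_succ]
  have hy : X ^ (n + 1) ∣ y + C c * X ^ (n + 2) - y := by
    rw [add_sub_cancel_left]; exact (pow_dvd_pow X (by omega)).mul_left _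
  have hp : X ^ (n + 1) ∣ D (y + C c * X ^ (n + 2)) - D y := by
    rw [hD, add_sub_cancel_left]; exact dvd_mul_left _ _
  have key := map_Esh_eq_add α β γ δ _ (mk_span_X_pow_eq_iff.mpr hy)
    (mk_span_X_pow_eq_iff.mpr hp) (congrArg _ hDD)
  rw [coeff_eq_of_X_pow_dvd_sub (mk_span_X_pow_eq_iff.mp key), map_add,
    coeff_mul_C_mul_X_pow]
  simp only [k, coeff_zero_eq_constantCoeff, map_mul, map_sub, map_add, map_pow, map_ofNat,
    map_one, constantCoeff_X]
  push_cast
  ring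

lemma coeff_Esh_sub_coeff_Esh (α β γ δ : ℝ) {i : ℕ} {y y' : ℝ⟦X⟧}
    (h : ∀ m ≤ i + 1, coeff m y = coeff m y') :
    coeff i (Esh α β γ δ y) - coeff i (Esh α β γ δ y') =
      8 * coeff 0 y * (i + 2) * (i + 1) * (coeff 0 y ^ 2 - 1)
        * (coeff (i + 2) y - coeff (i + 2) y') := by
  set c := coeff (i + 2) y - coeff (i + 2) y'
  have hdvd : X ^ (i + 1 + 2) ∣ y - (y' + C c * X ^ (i + 2)) := by
    refine X_pow_dvd_iff.mpr fun m hm => ?_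
    rcases (show m ≤ i + 1 ∨ m = i + 2 by omega) with hm | rfl
    · simp [coeff_X_pow, h m hm, show m ≠ i + 2 by omega]
    · rw [map_sub, map_add, coeff_C_mul_X_pow, if_pos rfl]
      ring
  rw [coeff_eq_of_X_pow_dvd_sub (X_pow_dvd_Esh_sub α β γ δ hdvd), coeff_Esh_add_C_mul_X_pow,
    h 0 (Nat.zero_le _)]
  ring

theorem shifted_PVI_coeff_dependence (α β γ δ : ℝ) (i : ℕ) :
    (∀ y y' : PowerSeries ℝ,
        (∀ m : ℕ, m ≤ i + 2 → PowerSeries.coeff m y = PowerSeries.coeff m y') →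
        PowerSeries.coeff i (Esh α β γ δ y) = PowerSeries.coeff i (Esh α β γ δ y')) ∧
    (∀ y y' : PowerSeries ℝ,
        (∀ m : ℕ, m ≠ i + 2 → PowerSeries.coeff m y = PowerSeries.coeff m y') →
        PowerSeries.coeff i (Esh α β γ δ y) - PowerSeries.coeff i (Esh α β γ δ y') =
          8 * PowerSeries.coeff 0 y * ((i : ℝ) + 2) * ((i : ℝ) + 1)
            * ((PowerSeries.coeff 0 y) ^ 2 - 1)
            * (PowerSeries.coeff (i + 2) y - PowerSeries.coeff (i + 2) y')) := by
  refine ⟨fun y y' h => ?_, fun y y' h =>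
    coeff_Esh_sub_coeff_Esh α β γ δ (i := i) fun m hm => h m (by omega)⟩
  have := coeff_Esh_sub_coeff_Esh α β γ δ (i := i) fun m hm => h m (by omega)
  rwa [h (i + 2) le_rfl, sub_self, mul_zero, sub_eq_zero] at this
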